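/- arXiv:2112.11720 — 3 statements merged into one kernel-verified Lean document; each statement's English description precedes it below -/
import Mathlib

section
/- Let G be a finite simple cubic graph and let X be a near independent dominating set of G, i.e., a dominating set X such that the subgraph G[X] induced by X has maximum degree at most 1. Then 2·i(G) ≤ 2·|X| + n₁(G[X]), where n₁(G[X]) is the number of vertices of degree 1 in the induced subgraph G[X]. -/
open Set

/-- The degree of a vertex `v` in a simple graph `G`. -/
noncomputable def deg {V : Type*} (G : SimpleGraph V) (v : V) : ℕ :=
  (G.neighborSet v).ncard

/-- `S` is a dominating set of `G`: every vertex not in `S` has a neighbor in `S`. -/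
def IsDomSet {V : Type*} (G : SimpleGraph V) (S : Set V) : Prop :=
  ∀ v ∉ S, ∃ u ∈ S, G.Adj u v

/-- `S` is an independent dominating set of `G`. -/
def IsIndepDomSet {V : Type*} (G : SimpleGraph V) (S : Set V) : Prop :=
  IsDomSet G S ∧ ∀ u ∈ S, ∀ v ∈ S, ¬ G.Adj u v

/-- The independent domination number `i(G)`. -/
noncomputable def indepDomNum {V : Type*} (G : SimpleGraph V) : ℕ :=
  sInf {n | ∃ S : Set V, IsIndepDomSet G S ∧ S.ncard = n}

/-- The domination number `γ(G)`. -/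
noncomputable def domNum {V : Type*} (G : SimpleGraph V) : ℕ :=
  sInf {n | ∃ S : Set V, IsDomSet G S ∧ S.ncard = n}

/-- `G` contains no cycle on 4 vertices as a subgraph. -/
def NoFourCycle {V : Type*} (G : SimpleGraph V) : Prop :=
  ¬ ∃ a b c d : V, a ≠ b ∧ a ≠ c ∧ a ≠ d ∧ b ≠ c ∧ b ≠ d ∧ c ≠ d ∧
      G.Adj a b ∧ G.Adj b c ∧ G.Adj c d ∧ G.Adj d a

/-- `nk G k` is the number of vertices of degree `k` in `G`. -/
noncomputable def nk {V : Type*} (G : SimpleGraph V) (k : ℕ) : ℕ :=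
  {v | deg G v = k}.ncard

/-!
Take a maximal independent subset `A` of `X` and put `R = X \ A`. Every vertex of `R` has a
neighbour in `A`, which is its only neighbour in `X`; so `R` is matched into distinct degree-one
vertices of `G[X]` outside `R`, and `2|R| ≤ n₁(G[X])`. Extend `A` to a maximal independent set `I`
of `G`. A vertex of `I \ A` lies outside `X` and can only be dominated by `R`, and a vertex of `R`
has at most two neighbours outside `X`; hence `i(G) ≤ |I| ≤ |A| + 2|R| = |X| + |R|`.
-/

section

variable {V : Type*} {G : SimpleGraph V}

lemma ncard_le_mul_ncard_of_forall_exists_adj [Finite V] {s t : Set V} {n : ℕ}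
    (hs : ∀ a ∈ s, ∃ b ∈ t, G.Adj b a) (ht : ∀ b ∈ t, (G.neighborSet b ∩ s).ncard ≤ n) :
    s.ncard ≤ n * t.ncard := by
  lift t to Finset V using t.toFinite
  have hcover : s ⊆ ⋃ b ∈ t, G.neighborSet b ∩ s := fun a ha => by
    obtain ⟨b, hb, hba⟩ := hs a ha
    exact mem_biUnion hb ⟨hba, ha⟩
  calc s.ncard ≤ (⋃ b ∈ t, G.neighborSet b ∩ s).ncard := ncard_le_ncard hcover
    _ ≤ ∑ b ∈ t, (G.neighborSet b ∩ s).ncard := t.set_ncard_biUnion_le _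
    _ ≤ t.card * n := Finset.sum_le_card_nsmul _ _ _ ht
    _ = n * (t : Set V).ncard := by rw [ncard_coe_finset, mul_comm]

lemma exists_adj_of_maximal_isIndepSet {D I : Set V}
    (hI : Maximal (fun I => I ⊆ D ∧ G.IsIndepSet I) I) {v : V} (hvD : v ∈ D) (hvI : v ∉ I) :
    ∃ u ∈ I, G.Adj u v := by
  by_contra! hv
  have hins : insert v I ⊆ D ∧ G.IsIndepSet (insert v I) :=
    ⟨insert_subset hvD hI.prop.1,
      pairwise_insert.2 ⟨hI.prop.2, fun u hu _ => ⟨fun h => hv u hu h.symm, hv u hu⟩⟩⟩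
  exact hvI (hI.2 hins (subset_insert v I) (mem_insert v I))

def undominated (G : SimpleGraph V) (A : Set V) : Set V :=
  {w | w ∉ A ∧ ∀ u ∈ A, ¬ G.Adj u w}

lemma indepDomNum_le_ncard_add [Finite V] {A : Set V} (hA : G.IsIndepSet A) :
    indepDomNum G ≤ A.ncard + (undominated G A).ncard := by
  obtain ⟨I, hAI, hI⟩ := Finite.exists_le_maximal (p := fun I => I ⊆ univ ∧ G.IsIndepSet I)
    ⟨subset_univ A, hA⟩
  have hIdom : IsIndepDomSet G I :=
    ⟨fun v hv => exists_adj_of_maximal_isIndepSet hI (mem_univ v) hv,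
      fun u hu v hv huv => hI.prop.2 hu hv (G.ne_of_adj huv) huv⟩
  have hIA : I \ A ⊆ undominated G A := fun w ⟨hwI, hwA⟩ =>
    ⟨hwA, fun u hu huw => hI.prop.2 (hAI hu) hwI (G.ne_of_adj huw) huw⟩
  calc indepDomNum G ≤ I.ncard := Nat.sInf_le ⟨I, hIdom, rfl⟩
    _ = A.ncard + (I \ A).ncard := by rw [← ncard_sdiff_add_ncard_of_subset hAI, add_comm]
    _ ≤ A.ncard + (undominated G A).ncard := Nat.add_le_add_left (ncard_le_ncard hIA) _

lemma deg_induce (X : Set V) (v : X) : deg (G.induce X) v = (G.neighborSet v ∩ X).ncard := by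
  have himage : Subtype.val '' (G.induce X).neighborSet v = G.neighborSet v ∩ X := by
    ext u
    constructor
    · rintro ⟨w, hw, rfl⟩
      exact ⟨hw, w.2⟩
    · rintro ⟨hu, huX⟩
      exact ⟨⟨u, huX⟩, hu, rfl⟩
  rw [deg, ← himage, ncard_image_of_injective _ Subtype.val_injective]

lemma nk_induce (X : Set V) (k : ℕ) :
    nk (G.induce X) k = {v ∈ X | (G.neighborSet v ∩ X).ncard = k}.ncard := by
  have himage : Subtype.val '' {v : X | deg (G.induce X) v = k} =
      {v ∈ X | (G.neighborSet v ∩ X).ncard = k} := by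
    ext u
    constructor
    · rintro ⟨w, hw, rfl⟩
      exact ⟨w.2, (deg_induce X w).symm.trans hw⟩
    · rintro ⟨huX, hu⟩
      exact ⟨⟨u, huX⟩, (deg_induce X _).trans hu, rfl⟩
  rw [nk, ← himage, ncard_image_of_injective _ Subtype.val_injective]

lemma ncard_undominated_le [Finite V] {X A : Set V}
    (hA : Maximal (fun I => I ⊆ X ∧ G.IsIndepSet I) A) (hdeg : ∀ v, deg G v ≤ 3)
    (hdom : IsDomSet G X) :
    (undominated G A).ncard ≤ 2 * (X \ A).ncard := by
  refine ncard_le_mul_ncard_of_forall_exists_adj (G := G) (fun w hw => ?_) (fun b hb => ?_)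
  · have hwX : w ∉ X := fun hwX =>
      let ⟨u, hu, huw⟩ := exists_adj_of_maximal_isIndepSet hA hwX hw.1
      hw.2 u hu huw
    obtain ⟨x, hxX, hxw⟩ := hdom w hwX
    exact ⟨x, ⟨hxX, fun hxA => hw.2 x hxA hxw⟩, hxw⟩
  · obtain ⟨u, huA, hub⟩ := exists_adj_of_maximal_isIndepSet hA hb.1 hb.2
    have hsub : G.neighborSet b ∩ undominated G A ⊆ G.neighborSet b \ {u} :=
      fun w ⟨hbw, hw⟩ => ⟨hbw, fun hwu => hw.1 (hwu ▸ huA)⟩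
    calc (G.neighborSet b ∩ undominated G A).ncard ≤ (G.neighborSet b \ {u}).ncard :=
          ncard_le_ncard hsub
      _ = deg G b - 1 := ncard_sdiff_singleton_of_mem hub.symm
      _ ≤ 2 := by have := hdeg b; omega

lemma two_mul_ncard_sdiff_le [Finite V] {X A : Set V}
    (hA : Maximal (fun I => I ⊆ X ∧ G.IsIndepSet I) A)
    (hX : ∀ v ∈ X, (G.neighborSet v ∩ X).ncard ≤ 1) :
    2 * (X \ A).ncard ≤ {v ∈ X | (G.neighborSet v ∩ X).ncard = 1}.ncard := by
  set D := {v ∈ X | (G.neighborSet v ∩ X).ncard = 1}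
  have hmemD : ∀ v ∈ X, ∀ u ∈ X, G.Adj v u → v ∈ D := fun v hv u hu hvu =>
    ⟨hv, le_antisymm (hX v hv) ((ncard_pos).2 ⟨u, hvu, hu⟩)⟩
  have hdomA : ∀ v ∈ X \ A, ∃ u ∈ A, G.Adj u v := fun v hv =>
    exists_adj_of_maximal_isIndepSet hA hv.1 hv.2
  have hRD : X \ A ⊆ D := fun v hv =>
    let ⟨u, huA, huv⟩ := hdomA v hv
    hmemD v hv.1 u (hA.prop.1 huA) huv.symm
  have hRle : (X \ A).ncard ≤ 1 * (D \ (X \ A)).ncard := by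
    refine ncard_le_mul_ncard_of_forall_exists_adj (G := G) (fun v hv => ?_) (fun b hb => ?_)
    · obtain ⟨u, huA, huv⟩ := hdomA v hv
      exact ⟨u, ⟨hmemD u (hA.prop.1 huA) v hv.1 huv, fun hu => hu.2 huA⟩, huv⟩
    · exact (ncard_le_ncard (inter_subset_inter_right _ sdiff_subset)).trans (hX b hb.1.1)
  rw [ncard_sdiff hRD] at hRle
  have := ncard_le_ncard hRD
  omega

end

/-- For a near independent dominating set `X` of a cubic graph `G`,
`2·i(G) ≤ 2·|X| + n₁(G[X])`. -/
theorem near_indep_dom_set_bound {V : Type*} [Fintype V] (G : SimpleGraph V)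
    (hcubic : ∀ v, deg G v = 3) (X : Set V) (hdom : IsDomSet G X)
    (hnear : ∀ v : X, deg (G.induce X) v ≤ 1) :
    2 * indepDomNum G ≤ 2 * X.ncard + nk (G.induce X) 1 := by
  have hX : ∀ v ∈ X, (G.neighborSet v ∩ X).ncard ≤ 1 := fun v hv =>
    deg_induce X ⟨v, hv⟩ ▸ hnear ⟨v, hv⟩
  obtain ⟨A, -, hA⟩ := Finite.exists_le_maximal (p := fun I => I ⊆ X ∧ G.IsIndepSet I)
    ⟨empty_subset X, pairwise_empty _⟩
  have hi := indepDomNum_le_ncard_add hA.prop.2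
  have hund := ncard_undominated_le hA (fun v => (hcubic v).le) hdom
  have hsdiff := two_mul_ncard_sdiff_le hA hX
  have hsplit := ncard_sdiff_add_ncard_of_subset hA.prop.1
  rw [nk_induce]
  omega
end

section
/- Let G be a finite simple cubic graph and let D be a minimum dominating set of G that, among all minimum dominating sets, has the minimum number of edges in the induced subgraph G[D]. Then every vertex of D has at most one neighbor in D; that is, G[D] has maximum degree at most 1, so D is a near independent dominating set of G. -/
open Set

def within {V : Type*} (G : SimpleGraph V) (S : Set V) : Set (Sym2 V) :=
  {e | e ∈ G.edgeSet ∧ ∀ v ∈ e, v ∈ S}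

lemma ncard_induce_edgeSet {V : Type*} (G : SimpleGraph V) (S : Set V) :
    ((G.induce S).edgeSet).ncard = (within G S).ncard := by
  have hinj : Function.Injective (Sym2.map (Subtype.val : S → V)) :=
    Sym2.map.injective Subtype.val_injective
  rw [← Set.ncard_image_of_injective _ hinj]
  congr 1
  ext e
  constructor
  · rintro ⟨e', he', rfl⟩
    induction e' using Sym2.ind with
    | _ a b =>
      refine ⟨he', ?_⟩
      intro v hv
      rw [Sym2.map_pair_eq, Sym2.mem_iff] at hv
      rcases hv with rfl | rfl
      exacts [a.2, b.2]
  · intro ⟨he, hS⟩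
    induction e using Sym2.ind with
    | _ a b =>
      have ha : a ∈ S := hS a (Sym2.mem_mk_left a b)
      have hb : b ∈ S := hS b (Sym2.mem_mk_right a b)
      exact ⟨s(⟨a, ha⟩, ⟨b, hb⟩), he, by rw [Sym2.map_pair_eq]⟩

lemma deg_induce_s4 {V : Type*} (G : SimpleGraph V) (D : Set V) (vD : D) :
    deg (G.induce D) vD = {u | u ∈ D ∧ G.Adj vD.val u}.ncard := by
  unfold deg
  rw [← Set.ncard_image_of_injective _ (Subtype.val_injective (p := (· ∈ D)))]
  congr 1
  ext u
  constructor
  · rintro ⟨u', hu', rfl⟩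
    exact ⟨u'.2, hu'⟩
  · rintro ⟨hu, hadj⟩
    exact ⟨⟨u, hu⟩, hadj, rfl⟩

lemma ncard_within_diff {V : Type*} [Fintype V] (G : SimpleGraph V) (D : Set V)
    (v : V) (hv : v ∈ D) :
    (within G D).ncard = (within G (D \ {v})).ncard + {u | u ∈ D ∧ G.Adj v u}.ncard := by
  classical
  have hfinV : ∀ s : Set V, s.Finite := fun s => s.toFinite
  have hfin : ∀ s : Set (Sym2 V), s.Finite := fun s => s.toFinite
  set F : Set (Sym2 V) := {e | e ∈ within G D ∧ v ∈ e} with hF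
  have hsplit : within G D = within G (D \ {v}) ∪ F := by
    ext e
    constructor
    · intro ⟨he, hS⟩
      by_cases hve : v ∈ e
      · exact Or.inr ⟨⟨he, hS⟩, hve⟩
      · refine Or.inl ⟨he, fun u hu => ⟨hS u hu, ?_⟩⟩
        rintro rfl
        exact hve hu
    · rintro (⟨he, hS⟩ | ⟨he, _⟩)
      · exact ⟨he, fun u hu => (hS u hu).1⟩
      · exact he
  have hdisj : Disjoint (within G (D \ {v})) F := by
    rw [Set.disjoint_left]
    rintro e ⟨_, hS⟩ ⟨_, hve⟩
    exact (hS v hve).2 rfl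
  have himg : F = (fun u => s(v, u)) '' {u | u ∈ D ∧ G.Adj v u} := by
    ext e
    constructor
    · rintro ⟨⟨he, hS⟩, hve⟩
      induction e using Sym2.ind with
      | _ a b =>
        rcases Sym2.mem_iff.mp hve with rfl | rfl
        · exact ⟨b, ⟨hS b (Sym2.mem_mk_right _ _), he⟩, rfl⟩
        · exact ⟨a, ⟨hS a (Sym2.mem_mk_left _ _), ((G.mem_edgeSet).mp he).symm⟩,
            Sym2.eq_swap⟩
    · rintro ⟨u, ⟨hu, hadj⟩, rfl⟩
      refine ⟨⟨(G.mem_edgeSet).mpr hadj, ?_⟩, Sym2.mem_mk_left _ _⟩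
      intro x hx
      rcases Sym2.mem_iff.mp hx with rfl | rfl
      exacts [hv, hu]
  have hcardF : F.ncard = {u | u ∈ D ∧ G.Adj v u}.ncard := by
    rw [himg, Set.ncard_image_of_injOn]
    intro a _ b _ hab
    exact (Sym2.congr_right).mp hab
  rw [hsplit, Set.ncard_union_eq hdisj (hfin _) (hfin _), hcardF]

/-- A minimum dominating set of a cubic graph minimizing the number of induced edges
is a near independent dominating set: every vertex of `D` has at most one neighbor
in `D`, i.e. `G[D]` has maximum degree at most 1. -/
theorem min_dom_set_is_near_indep {V : Type*} [Fintype V] (G : SimpleGraph V)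
    (hcubic : ∀ v, deg G v = 3) (D : Set V) (hdom : IsDomSet G D)
    (hmin : ∀ D' : Set V, IsDomSet G D' → D.ncard ≤ D'.ncard)
    (hminEdges : ∀ D' : Set V, IsDomSet G D' → D'.ncard = D.ncard →
      ((G.induce D).edgeSet).ncard ≤ ((G.induce D').edgeSet).ncard) :
    ∀ v : D, deg (G.induce D) v ≤ 1 := by
  classical
  intro vD
  by_contra hcon
  push_neg at hcon
  obtain ⟨v, hvD⟩ := vD
  have hA : 2 ≤ {u | u ∈ D ∧ G.Adj v u}.ncard := by
    rw [← deg_induce_s4 G D ⟨v, hvD⟩]; omega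
  set A : Set V := {u | u ∈ D ∧ G.Adj v u} with hAdef
  have hAne : A.Nonempty := Set.nonempty_of_ncard_ne_zero (by omega)
  obtain ⟨a, haD, haAdj⟩ := hAne
  by_cases hcase : ∀ x, x ∉ D → G.Adj v x → ∃ u ∈ D \ {v}, G.Adj u x
  · -- D \ {v} is dominating, contradicting minimality
    have hdom' : IsDomSet G (D \ {v}) := by
      intro x hx
      by_cases hxD : x ∈ D
      · have hxv : x = v := by
          by_contra hne
          exact hx ⟨hxD, hne⟩
        subst hxv
        exact ⟨a, ⟨haD, fun h => G.irrefl (h ▸ haAdj)⟩, haAdj.symm⟩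
      · obtain ⟨u, huD, huAdj⟩ := hdom x hxD
        by_cases huv : u = v
        · subst huv
          obtain ⟨u', hu', hu'Adj⟩ := hcase x hxD huAdj
          exact ⟨u', hu', hu'Adj⟩
        · exact ⟨u, ⟨huD, huv⟩, huAdj⟩
    have h1 := hmin (D \ {v}) hdom'
    have h2 : (D \ {v}).ncard + 1 = D.ncard := Set.ncard_diff_singleton_add_one hvD D.toFinite
    omega
  · push_neg at hcase
    obtain ⟨w, hwD, hwAdj, hwIso⟩ := hcase
    -- w is the unique neighbor of v outside D
    have huniq : ∀ x, x ∉ D → G.Adj v x → x = w := by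
      intro x hxD hxAdj
      by_contra hne
      have hsub : insert x (insert w A) ⊆ G.neighborSet v := by
        rintro u (rfl | rfl | ⟨_, h⟩)
        exacts [hxAdj, hwAdj, h]
      have hc1 : (insert w A).ncard = A.ncard + 1 :=
        Set.ncard_insert_of_notMem (fun h => hwD h.1) A.toFinite
      have hc2 : (insert x (insert w A)).ncard = (insert w A).ncard + 1 := by
        refine Set.ncard_insert_of_notMem ?_ (insert w A).toFinite
        rintro (rfl | ⟨h, _⟩)
        exacts [hne rfl, hxD h]
      have hle := Set.ncard_le_ncard hsub (G.neighborSet v).toFinite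
      have := hcubic v
      unfold deg at this
      omega
    set D' : Set V := insert w (D \ {v}) with hD'def
    have hdomD' : IsDomSet G D' := by
      intro x hx
      have hxw : x ≠ w := fun h => hx (h ▸ Set.mem_insert w _)
      have hxDv : x ∉ D \ {v} := fun h => hx (Set.mem_insert_of_mem _ h)
      by_cases hxv : x = v
      · subst hxv
        exact ⟨w, Set.mem_insert w _, hwAdj.symm⟩
      · have hxD : x ∉ D := fun h => hxDv ⟨h, hxv⟩
        obtain ⟨u, huD, huAdj⟩ := hdom x hxD
        by_cases huv : u = v
        · subst huv
          exact absurd (huniq x hxD huAdj) hxw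
        · exact ⟨u, Set.mem_insert_of_mem _ ⟨huD, huv⟩, huAdj⟩
    have hsize : D'.ncard = D.ncard := by
      rw [hD'def, Set.ncard_insert_of_notMem (fun h => hwD h.1) (D \ {v}).toFinite,
        Set.ncard_diff_singleton_add_one hvD D.toFinite]
    have hW : within G D' = within G (D \ {v}) := by
      ext e
      constructor
      · intro ⟨he, hS⟩
        refine ⟨he, fun u hu => ?_⟩
        rcases hS u hu with rfl | h
        · -- u = w, other endpoint is a neighbor of w in D', contradiction
          exfalso
          induction e using Sym2.ind with
          | _ a b =>
            rcases Sym2.mem_iff.mp hu with rfl | rfl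
            · have hb := hS b (Sym2.mem_mk_right _ _)
              have hadj : G.Adj u b := (G.mem_edgeSet).mp he
              rcases hb with rfl | hb
              · exact G.irrefl hadj
              · exact hwIso b hb hadj.symm
            · have ha := hS a (Sym2.mem_mk_left _ _)
              have hadj : G.Adj a u := (G.mem_edgeSet).mp he
              rcases ha with rfl | ha
              · exact G.irrefl hadj
              · exact hwIso a ha hadj
        · exact h
      · intro ⟨he, hS⟩
        exact ⟨he, fun u hu => Set.mem_insert_of_mem _ (hS u hu)⟩
    have hE := hminEdges D' hdomD' hsize
    rw [ncard_induce_edgeSet, ncard_induce_edgeSet, hW,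
      ncard_within_diff G D v hvD, ← hAdef] at hE
    omega
end

section
/- If G is a minimal counterexample (as defined in the context), then G has no vertex with two neighbors of degree 1. -/
open Set

/-- The weight of a vertex: 14, 9, 6, 5 according as its degree is 0, 1, 2, 3. -/
noncomputable def wt {V : Type*} (G : SimpleGraph V) (v : V) : ℕ :=
  if deg G v = 0 then 14 else if deg G v = 1 then 9 else if deg G v = 2 then 6 else 5

/-- The weight of a set of vertices: the sum of their weights. -/
noncomputable def wtSet {V : Type*} (G : SimpleGraph V) (X : Set V) : ℕ :=
  ∑ᶠ v ∈ X, wt G v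

/-- The weight of the whole graph `G`. -/
noncomputable def wtGraph {V : Type*} (G : SimpleGraph V) : ℕ :=
  wtSet G Set.univ

/-- `G` is a minimal counterexample: subcubic, no 4-cycle, `14·i(G) > w(G)`,
and every proper subgraph `H` of `G` satisfies `14·i(H) ≤ w(H)`. -/
def MinimalCounterexample {V : Type*} [Fintype V] (G : SimpleGraph V) : Prop :=
  (∀ v, deg G v ≤ 3) ∧ NoFourCycle G ∧ wtGraph G < 14 * indepDomNum G ∧
    ∀ H : G.Subgraph, H ≠ ⊤ → 14 * indepDomNum H.coe ≤ wtGraph H.coe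

/-! Let `a`, `b` be leaves at `v` and let `H` be the proper subgraph obtained by deleting the
closed neighbourhood `N[v]`. Adding `v` to an independent dominating set of `H` gives
`i(G) ≤ i(H) + 1`. A vertex outside `N[v]` loses one degree per neighbour in `N[v]`, and each lost
degree raises its weight by at most 5. Since `a` and `b` are leaves, only a third neighbour `c` of
`v` can have neighbours outside `N[v]`, at most two. So either `deg v = 2`, `w(N[v]) = 24` and no
edge leaves `N[v]`, or `w(N[v]) ≥ 28` and at most two edges leave; either way `w(H) + 14 ≤ w(G)`,
and `14 i(G) ≤ 14 i(H) + 14 ≤ w(H) + 14 ≤ w(G)` contradicts `w(G) < 14 i(G)`.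
-/

theorem Set.exists_mem_subset_insert_insert_of_ncard_le_three {α : Type*} {S : Set α}
    (hS : S.Finite) (h3 : S.ncard ≤ 3) {a b : α} (hab : a ≠ b) (ha : a ∈ S) (hb : b ∈ S) :
    ∃ c ∈ S, S ⊆ {a, b, c} := by
  have hrest : (S \ {a, b}).ncard ≤ 1 := by
    rw [Set.ncard_sdiff (Set.insert_subset ha (Set.singleton_subset_iff.mpr hb)),
      Set.ncard_pair hab]
    omega
  have hcover : S ⊆ S \ {a, b} ∪ {a, b} := Set.subset_sdiff_union _ _
  rcases (Set.ncard_le_one_iff_eq hS.sdiff).mp hrest with h | ⟨c, hc⟩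
  · refine ⟨a, ha, hcover.trans ?_⟩
    rw [h]
    intro x
    simp only [Set.mem_union, Set.mem_insert_iff, Set.mem_singleton_iff, Set.mem_empty_iff_false]
    tauto
  · have hcS : c ∈ S \ {a, b} := hc ▸ Set.mem_singleton c
    refine ⟨c, hcS.1, hcover.trans ?_⟩
    rw [hc]
    intro x
    simp only [Set.mem_union, Set.mem_insert_iff, Set.mem_singleton_iff]
    tauto

namespace SimpleGraph

variable {V W : Type*}

def closedNbhd (G : SimpleGraph V) (v : V) : Set V :=
  insert v (G.neighborSet v)

lemma mem_closedNbhd_self (G : SimpleGraph V) (v : V) : v ∈ G.closedNbhd v :=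
  Set.mem_insert _ _

lemma neighborSet_subset_closedNbhd (G : SimpleGraph V) (v : V) :
    G.neighborSet v ⊆ G.closedNbhd v :=
  Set.subset_insert _ _

lemma neighborSet_eq_singleton_of_deg_eq_one [Finite V] {G : SimpleGraph V} {a v : V}
    (ha : deg G a = 1) (hva : G.Adj v a) : G.neighborSet a = {v} := by
  obtain ⟨w, hw⟩ := Set.ncard_eq_one.mp ha
  have hv : v ∈ G.neighborSet a := hva.symm
  rw [hw, Set.mem_singleton_iff] at hv
  rw [hw, hv]

lemma indepDomNum_le_ncard {G : SimpleGraph V} {S : Set V} (hS : IsIndepDomSet G S) :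
    indepDomNum G ≤ S.ncard :=
  Nat.sInf_le ⟨S, hS, rfl⟩

lemma exists_isIndepDomSet [Finite V] (G : SimpleGraph V) : ∃ S, IsIndepDomSet G S := by
  obtain ⟨S, hS⟩ := (Set.toFinite {S : Set V | ∀ u ∈ S, ∀ w ∈ S, ¬ G.Adj u w}).exists_maximal
    ⟨∅, by simp⟩
  refine ⟨S, fun x hx => ?_, hS.1⟩
  by_contra! hxS
  have hindep : ∀ u ∈ insert x S, ∀ w ∈ insert x S, ¬ G.Adj u w := by
    rintro u (rfl | hu) w (rfl | hw)
    exacts [G.irrefl, fun h => hxS w hw h.symm, hxS u hu, hS.1 u hu w hw]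
  exact hx (hS.2 hindep (Set.subset_insert x S) (Set.mem_insert x S))

lemma exists_isIndepDomSet_ncard_eq_indepDomNum [Finite V] (G : SimpleGraph V) :
    ∃ S, IsIndepDomSet G S ∧ S.ncard = indepDomNum G := by
  obtain ⟨S, hS⟩ := G.exists_isIndepDomSet
  exact Nat.sInf_mem (s := {n | ∃ S, IsIndepDomSet G S ∧ S.ncard = n}) ⟨_, S, hS, rfl⟩

lemma isIndepDomSet_insert_image_val {G : SimpleGraph V} {v : V}
    {T : Set ↥(G.closedNbhd v)ᶜ}
    (hT : IsIndepDomSet ((⊤ : G.Subgraph).induce (G.closedNbhd v)ᶜ).coe T) :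
    IsIndepDomSet G (insert v (Subtype.val '' T)) := by
  refine ⟨fun x hx => ?_, ?_⟩
  · by_cases hxD : x ∈ G.closedNbhd v
    · rcases hxD with rfl | hvx
      · exact absurd (Set.mem_insert x _) hx
      · exact ⟨v, Set.mem_insert v _, hvx⟩
    · obtain ⟨u, hu, -, -, hux⟩ :=
        hT.1 ⟨x, hxD⟩ fun h => hx (Set.mem_insert_of_mem v ⟨_, h, rfl⟩)
      exact ⟨u, Set.mem_insert_of_mem v ⟨u, hu, rfl⟩, hux⟩
  · rintro _ (rfl | ⟨p, hp, rfl⟩) _ (rfl | ⟨q, hq, rfl⟩) hadj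
    · exact G.irrefl hadj
    · exact q.2 (G.neighborSet_subset_closedNbhd _ hadj)
    · exact p.2 (G.neighborSet_subset_closedNbhd _ hadj.symm)
    · exact hT.2 p hp q hq ⟨p.2, q.2, hadj⟩

lemma indepDomNum_le_indepDomNum_induce_compl_closedNbhd_add_one [Finite V]
    (G : SimpleGraph V) (v : V) :
    indepDomNum G ≤ indepDomNum ((⊤ : G.Subgraph).induce (G.closedNbhd v)ᶜ).coe + 1 := by
  obtain ⟨T, hT, hcard⟩ := exists_isIndepDomSet_ncard_eq_indepDomNum
    ((⊤ : G.Subgraph).induce (G.closedNbhd v)ᶜ).coe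
  have hv : v ∉ Subtype.val '' T := fun ⟨t, _, ht⟩ =>
    t.2 (Set.mem_of_eq_of_mem ht (G.mem_closedNbhd_self v))
  calc indepDomNum G ≤ (insert v (Subtype.val '' T)).ncard :=
        indepDomNum_le_ncard (isIndepDomSet_insert_image_val hT)
    _ = _ := by
        rw [Set.ncard_insert_of_notMem hv, Set.ncard_image_of_injective _ Subtype.val_injective,
          hcard]

lemma deg_induce_add_ncard_sdiff [Finite V] (G : SimpleGraph V) (s : Set V) {x : V}
    (hx : x ∈ s) :
    deg ((⊤ : G.Subgraph).induce s).coe ⟨x, hx⟩ + (G.neighborSet x \ s).ncard = deg G x := by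
  have himage : Subtype.val '' (((⊤ : G.Subgraph).induce s).coe.neighborSet ⟨x, hx⟩) =
      G.neighborSet x ∩ s := by
    ext y
    constructor
    · rintro ⟨⟨y, hys⟩, ⟨-, -, hxy⟩, rfl⟩
      exact ⟨hxy, hys⟩
    · rintro ⟨hxy, hys⟩
      exact ⟨⟨y, hys⟩, ⟨hx, hys, hxy⟩, rfl⟩
  rw [deg, ← Set.ncard_image_of_injective _ Subtype.val_injective, himage,
    Set.ncard_inter_add_ncard_sdiff_eq_ncard, deg]

lemma five_le_wt (G : SimpleGraph V) (x : V) : 5 ≤ wt G x := by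
  unfold wt
  split_ifs <;> omega

lemma wt_eq_nine_of_deg_eq_one {G : SimpleGraph V} {x : V} (h : deg G x = 1) : wt G x = 9 := by
  simp [wt, h]

lemma wt_le_wt_add_of_deg_le (G : SimpleGraph V) (H : SimpleGraph W) {x : V} {y : W}
    (h : deg H y ≤ deg G x) : wt H y ≤ wt G x + 5 * (deg G x - deg H y) := by
  unfold wt
  split_ifs <;> omega

lemma wt_induce_le [Finite V] (G : SimpleGraph V) (s : Set V) {x : V} (hx : x ∈ s) :
    wt ((⊤ : G.Subgraph).induce s).coe ⟨x, hx⟩ ≤ wt G x + 5 * (G.neighborSet x \ s).ncard := by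
  have hdeg := G.deg_induce_add_ncard_sdiff s hx
  have := wt_le_wt_add_of_deg_le G ((⊤ : G.Subgraph).induce s).coe
    (x := x) (y := ⟨x, hx⟩) (by omega)
  omega

lemma wtGraph_eq_sum [Fintype V] (G : SimpleGraph V) : wtGraph G = ∑ x, wt G x := by
  rw [wtGraph, wtSet, finsum_mem_univ, finsum_eq_sum_of_fintype]

lemma wtSet_insert [Finite V] (G : SimpleGraph V) {s : Set V} {x : V} (hx : x ∉ s) :
    wtSet G (insert x s) = wt G x + wtSet G s :=
  finsum_mem_insert _ hx (Set.toFinite s)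

lemma wtSet_singleton (G : SimpleGraph V) (x : V) : wtSet G {x} = wt G x :=
  finsum_mem_singleton

lemma wtGraph_induce_compl_add_wtSet_le [Fintype V] (G : SimpleGraph V) (D : Set V) :
    wtGraph ((⊤ : G.Subgraph).induce Dᶜ).coe + wtSet G D ≤
      wtGraph G + 5 * ∑ᶠ x ∈ Dᶜ, (G.neighborSet x ∩ D).ncard := by
  classical
  have hH : wtGraph ((⊤ : G.Subgraph).induce Dᶜ).coe ≤
      ∑ x ∈ Dᶜ.toFinset, (wt G x + 5 * (G.neighborSet x ∩ D).ncard) := by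
    rw [wtGraph_eq_sum, Finset.sum_subtype Dᶜ.toFinset (fun _ => Set.mem_toFinset)]
    exact Finset.sum_le_sum fun ⟨x, hx⟩ _ => by
      simpa only [Set.sdiff_compl] using G.wt_induce_le Dᶜ hx
  have hG : wtGraph G = ∑ x ∈ Dᶜ.toFinset, wt G x + wtSet G D := by
    rw [wtGraph_eq_sum, wtSet, finsum_mem_eq_toFinset_sum, Set.toFinset_compl,
      Finset.sum_compl_add_sum]
  rw [Finset.sum_add_distrib, ← Finset.mul_sum] at hH
  rw [finsum_mem_eq_toFinset_sum, hG]
  omega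

lemma finsum_ncard_neighborSet_inter_le [Fintype V] {G : SimpleGraph V} {D : Set V} {c v : V}
    (hv : v ∈ D) (hcv : G.Adj c v) (hD : ∀ x ∉ D, G.neighborSet x ∩ D ⊆ {c}) :
    ∑ᶠ x ∈ Dᶜ, (G.neighborSet x ∩ D).ncard ≤ deg G c - 1 := by
  classical
  have hterm : ∀ x ∈ Dᶜ.toFinset, (G.neighborSet x ∩ D).ncard ≤ if G.Adj c x then 1 else 0 := by
    intro x hx
    rw [Set.mem_toFinset] at hx
    split_ifs with hcx
    · exact (Set.ncard_le_ncard (hD x hx)).trans (Set.ncard_singleton c).le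
    · have hempty : G.neighborSet x ∩ D = ∅ := Set.subset_empty_iff.mp fun y hy => by
        obtain rfl := hD x hx hy
        exact hcx hy.1.symm
      simp [hempty]
  have hsub : {x ∈ Dᶜ.toFinset | G.Adj c x} ⊆ (G.neighborSet c \ {v}).toFinset := by
    intro x hx
    simp only [Finset.mem_filter, Set.mem_toFinset, Set.mem_compl_iff] at hx
    simp only [Set.mem_toFinset, Set.mem_sdiff, mem_neighborSet, Set.mem_singleton_iff]
    exact ⟨hx.2, fun hxv => hx.1 (hxv ▸ hv)⟩
  rw [finsum_mem_eq_toFinset_sum]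
  calc ∑ x ∈ Dᶜ.toFinset, (G.neighborSet x ∩ D).ncard
      ≤ ∑ x ∈ Dᶜ.toFinset, if G.Adj c x then 1 else 0 := Finset.sum_le_sum hterm
    _ = Finset.card {x ∈ Dᶜ.toFinset | G.Adj c x} := Finset.sum_boole _ _
    _ ≤ Finset.card (G.neighborSet c \ {v}).toFinset := Finset.card_le_card hsub
    _ = deg G c - 1 := by
        rw [← Set.ncard_eq_toFinset_card',
          Set.ncard_sdiff_singleton_of_mem ((G.mem_neighborSet c v).mpr hcv), deg]

lemma neighborSet_inter_closedNbhd_subset {G : SimpleGraph V} {v c x : V}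
    (hleaf : ∀ y ∈ G.neighborSet v, y ≠ c → G.neighborSet y = {v}) (hx : x ∉ G.closedNbhd v) :
    G.neighborSet x ∩ G.closedNbhd v ⊆ {c} := by
  rintro y ⟨hxy, rfl | hvy⟩
  · exact absurd (G.neighborSet_subset_closedNbhd y hxy.symm) hx
  · by_contra hyc
    have hyx : x ∈ G.neighborSet y := hxy.symm
    rw [hleaf y hvy hyc, Set.mem_singleton_iff] at hyx
    exact hx (hyx ▸ G.mem_closedNbhd_self v)

lemma wtGraph_induce_compl_closedNbhd_add_fourteen_le [Fintype V] {G : SimpleGraph V}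
    (hG : ∀ x, deg G x ≤ 3) {v a b : V} (hab : a ≠ b) (hva : G.Adj v a) (hvb : G.Adj v b)
    (ha : deg G a = 1) (hb : deg G b = 1) :
    wtGraph ((⊤ : G.Subgraph).induce (G.closedNbhd v)ᶜ).coe + 14 ≤ wtGraph G := by
  obtain ⟨c, hvc, hN⟩ := Set.exists_mem_subset_insert_insert_of_ncard_le_three
    (Set.toFinite _) (hG v) hab hva hvb
  have hleaf : ∀ y ∈ G.neighborSet v, y ≠ c → G.neighborSet y = {v} := by
    intro y hy hyc
    rcases hN hy with rfl | rfl | rfl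
    exacts [neighborSet_eq_singleton_of_deg_eq_one ha hva,
      neighborSet_eq_singleton_of_deg_eq_one hb hvb, absurd rfl hyc]
  have hcut := finsum_ncard_neighborSet_inter_le (G.mem_closedNbhd_self v) hvc.symm
    fun _ => neighborSet_inter_closedNbhd_subset hleaf
  have hdel := G.wtGraph_induce_compl_add_wtSet_le (G.closedNbhd v)
  have hD : G.closedNbhd v = insert c {v, a, b} := by
    rw [closedNbhd, hN.antisymm (by simp [Set.insert_subset_iff, hva, hvb, hvc])]
    ext; simp only [Set.mem_insert_iff, Set.mem_singleton_iff]; tauto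
  have hvab : wtSet G {v, a, b} = wt G v + 9 + 9 := by
    rw [G.wtSet_insert (by simp [hva.ne, hvb.ne]), G.wtSet_insert (by simpa using hab),
      wtSet_singleton, wt_eq_nine_of_deg_eq_one ha, wt_eq_nine_of_deg_eq_one hb, add_assoc]
  have hv := G.five_le_wt v
  rw [hD] at hdel hcut ⊢
  by_cases hc : c ∈ ({v, a, b} : Set V)
  · have hc1 : deg G c = 1 := by
      rcases hc with rfl | rfl | rfl
      exacts [(G.irrefl hvc).elim, ha, hb]
    rw [Set.insert_eq_of_mem hc] at hdel hcut ⊢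
    omega
  · rw [G.wtSet_insert hc] at hdel
    have := G.five_le_wt c
    have := hG c
    omega

end SimpleGraph

open SimpleGraph in
/-- A minimal counterexample has no vertex with two neighbors of degree 1. -/
theorem no_vertex_with_two_deg_one_neighbors {V : Type*} [Fintype V] (G : SimpleGraph V)
    (hG : MinimalCounterexample G) :
    ¬ ∃ v a b : V, a ≠ b ∧ G.Adj v a ∧ G.Adj v b ∧ deg G a = 1 ∧ deg G b = 1 := by
  rintro ⟨v, a, b, hab, hva, hvb, ha, hb⟩
  obtain ⟨hcubic, -, hlt, hmin⟩ := hG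
  have hproper : (⊤ : G.Subgraph).induce (G.closedNbhd v)ᶜ ≠ ⊤ := fun h =>
    Set.compl_ne_univ.mpr ⟨v, G.mem_closedNbhd_self v⟩ (congrArg Subgraph.verts h)
  have hsub := hmin _ hproper
  have hindep := G.indepDomNum_le_indepDomNum_induce_compl_closedNbhd_add_one v
  have hweight := wtGraph_induce_compl_closedNbhd_add_fourteen_le hcubic hab hva hvb ha hb
  omega
end
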